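/- Let θ' : ℝ → ℝ be smooth and let x_n, y_n, z_n be the functions produced by the superadiabatic recursion from θ'. Then for every n ≥ 1 and every t ∈ ℝ, z_{n+2}(t) = −z_n''(t) − θ'(t)²·z_n(t) + θ''(t)·y_n(t), where θ'' denotes the derivative of θ'. -/

import Mathlib

/-- The superadiabatic recursion: `sa θ n = (x_n, y_n, z_n)`, with
`x₁ = -(i/2)θ`, `y₁ = z₁ = 0`, and for `n ≥ 2`:
`x_n = -i(z_{n-1}' - θ·y_{n-1})`, `z_n = -i·x_{n-1}'`,
`y_n = ∑_{j=1}^{n-1} (-x_j·x_{n-j} + y_j·y_{n-j} + z_j·z_{n-j})`. -/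
noncomputable def sa (θ : ℝ → ℂ) : ℕ → (ℝ → ℂ) × (ℝ → ℂ) × (ℝ → ℂ)
  | 0 => (0, 0, 0)
  | 1 => (fun t => -(Complex.I / 2) * θ t, 0, 0)
  | n + 2 =>
      (fun t => -Complex.I * (deriv (sa θ (n + 1)).2.2 t - θ t * (sa θ (n + 1)).2.1 t),
       fun t => ∑ j ∈ (Finset.Icc 1 (n + 1)).attach,
         (-(sa θ j.1).1 t * (sa θ (n + 2 - j.1)).1 t
           + (sa θ j.1).2.1 t * (sa θ (n + 2 - j.1)).2.1 t
           + (sa θ j.1).2.2 t * (sa θ (n + 2 - j.1)).2.2 t),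
       fun t => -Complex.I * deriv (sa θ (n + 1)).1 t)
  termination_by n => n
  decreasing_by
    all_goals
      first
        | omega
        | (have hj := Finset.mem_Icc.mp j.2; omega)

/-- `x_n` of the superadiabatic recursion. -/
noncomputable def saX (θ : ℝ → ℂ) (n : ℕ) : ℝ → ℂ := (sa θ n).1
/-- `y_n` of the superadiabatic recursion. -/
noncomputable def saY (θ : ℝ → ℂ) (n : ℕ) : ℝ → ℂ := (sa θ n).2.1
/-- `z_n` of the superadiabatic recursion. -/
noncomputable def saZ (θ : ℝ → ℂ) (n : ℕ) : ℝ → ℂ := (sa θ n).2.2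

lemma saZ_eq (θ : ℝ → ℂ) (n : ℕ) :
    saZ θ (n + 2) = fun t => -Complex.I * deriv (saX θ (n + 1)) t := by
  simp [saZ, saX, sa]

lemma saX_eq (θ : ℝ → ℂ) (n : ℕ) :
    saX θ (n + 2) = fun t =>
      -Complex.I * (deriv (saZ θ (n + 1)) t - θ t * saY θ (n + 1) t) := by
  simp [saZ, saX, saY, sa]

lemma saY_eq (θ : ℝ → ℂ) (n : ℕ) :
    saY θ (n + 2) = fun t => ∑ j ∈ Finset.Icc 1 (n + 1),
      (-saX θ j t * saX θ (n + 2 - j) t + saY θ j t * saY θ (n + 2 - j) t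
        + saZ θ j t * saZ θ (n + 2 - j) t) := by
  funext t
  simp only [saY, sa]
  rw [← Finset.sum_attach (Finset.Icc 1 (n+1))]
  rfl
lemma sa_smooth (θ : ℝ → ℂ) (hθ : ContDiff ℝ (⊤ : ℕ∞) θ) : ∀ n : ℕ,
    ContDiff ℝ (⊤ : ℕ∞) (saX θ n) ∧ ContDiff ℝ (⊤ : ℕ∞) (saY θ n) ∧ ContDiff ℝ (⊤ : ℕ∞) (saZ θ n) := by
  intro n
  induction n using Nat.strong_induction_on with
  | _ n ih =>
    match n with
    | 0 => refine ⟨?_, ?_, ?_⟩ <;> · simp only [saX, saY, saZ, sa]; exact contDiff_const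
    | 1 =>
      refine ⟨?_, ?_, ?_⟩
      · simp only [saX, sa]; exact contDiff_const.mul hθ
      · simp only [saY, sa]; exact contDiff_const
      · simp only [saZ, sa]; exact contDiff_const
    | n + 2 =>
      obtain ⟨hX1, hY1, hZ1⟩ := ih (n+1) (by omega)
      refine ⟨?_, ?_, ?_⟩
      · rw [saX_eq]
        exact contDiff_const.mul (((contDiff_infty_iff_deriv.mp hZ1).2).sub (hθ.mul hY1))
      · rw [saY_eq]
        refine ContDiff.sum fun j hj => ?_
        have hj' := Finset.mem_Icc.mp hj
        obtain ⟨hXj, hYj, hZj⟩ := ih j (by omega)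
        obtain ⟨hXk, hYk, hZk⟩ := ih (n + 2 - j) (by omega)
        exact ((hXj.neg.mul hXk).add (hYj.mul hYk)).add (hZj.mul hZk)
      · rw [saZ_eq]
        exact contDiff_const.mul (contDiff_infty_iff_deriv.mp hX1).2
lemma saZ_one (θ : ℝ → ℂ) : saZ θ 1 = 0 := by simp [saZ, sa]

lemma saX_one (θ : ℝ → ℂ) (t : ℝ) : saX θ 1 t = -(Complex.I / 2) * θ t := by
  simp [saX, sa]

lemma deriv_saX (θ : ℝ → ℂ) (n : ℕ) (hn : 1 ≤ n) (t : ℝ) :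
    deriv (saX θ n) t = Complex.I * saZ θ (n + 1) t := by
  obtain ⟨m, rfl⟩ : ∃ m, n = m + 1 := ⟨n - 1, by omega⟩
  rw [saZ_eq]
  have h2 : Complex.I * Complex.I = -1 := Complex.I_mul_I
  linear_combination (deriv (saX θ (m+1)) t) * h2

lemma deriv_saZ (θ : ℝ → ℂ) (n : ℕ) (hn : 1 ≤ n) (t : ℝ) :
    deriv (saZ θ n) t = Complex.I * saX θ (n + 1) t + θ t * saY θ n t := by
  obtain ⟨m, rfl⟩ : ∃ m, n = m + 1 := ⟨n - 1, by omega⟩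
  rw [saX_eq]
  have h2 : Complex.I * Complex.I = -1 := Complex.I_mul_I
  linear_combination (deriv (saZ θ (m+1)) t - θ t * saY θ (m+1) t) * h2

lemma deriv_saY (θ : ℝ → ℂ) (hθ : ContDiff ℝ (⊤ : ℕ∞) θ) :
    ∀ n : ℕ, ∀ t : ℝ, deriv (saY θ n) t = -θ t * saZ θ n t := by
  have diffX : ∀ m, Differentiable ℝ (saX θ m) :=
    fun m => (sa_smooth θ hθ m).1.differentiable (by simp)
  have diffY : ∀ m, Differentiable ℝ (saY θ m) :=
    fun m => (sa_smooth θ hθ m).2.1.differentiable (by simp)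
  have diffZ : ∀ m, Differentiable ℝ (saZ θ m) :=
    fun m => (sa_smooth θ hθ m).2.2.differentiable (by simp)
  intro n
  induction n using Nat.strong_induction_on with
  | _ n ih =>
    match n with
    | 0 =>
      intro t
      simp only [saY, saZ, sa]
      rw [show (0 : ℝ → ℂ) = fun _ => (0:ℂ) from rfl, deriv_const]
      ring
    | 1 =>
      intro t
      simp only [saY, saZ, sa]
      rw [show (0 : ℝ → ℂ) = fun _ => (0:ℂ) from rfl, deriv_const]
      ring
    | n + 2 =>
      intro t
      set B : ℕ → ℂ := fun m =>
        saX θ (m + 1) t * saZ θ (n + 2 - m) t - saZ θ (m + 1) t * saX θ (n + 2 - m) t with hB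
      rw [saY_eq]
      rw [deriv_fun_sum (fun j hj => by
        have hj' := Finset.mem_Icc.mp hj
        exact (((diffX j t).neg.mul (diffX (n+2-j) t)).add
          ((diffY j t).mul (diffY (n+2-j) t))).add ((diffZ j t).mul (diffZ (n+2-j) t)))]
      have hterm : ∀ j ∈ Finset.Icc 1 (n + 1),
          deriv (fun s => -saX θ j s * saX θ (n + 2 - j) s
            + saY θ j s * saY θ (n + 2 - j) s + saZ θ j s * saZ θ (n + 2 - j) s) t
          = Complex.I * (B j - B (j - 1)) := by
        intro j hj
        obtain ⟨hj1, hj2⟩ := Finset.mem_Icc.mp hj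
        set k := n + 2 - j with hk
        have hk1 : 1 ≤ k := by omega
        have HXj : HasDerivAt (saX θ j) (Complex.I * saZ θ (j + 1) t) t :=
          deriv_saX θ j hj1 t ▸ (diffX j t).hasDerivAt
        have HXk : HasDerivAt (saX θ k) (Complex.I * saZ θ (k + 1) t) t :=
          deriv_saX θ k hk1 t ▸ (diffX k t).hasDerivAt
        have HZj : HasDerivAt (saZ θ j)
            (Complex.I * saX θ (j + 1) t + θ t * saY θ j t) t :=
          deriv_saZ θ j hj1 t ▸ (diffZ j t).hasDerivAt
        have HZk : HasDerivAt (saZ θ k)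
            (Complex.I * saX θ (k + 1) t + θ t * saY θ k t) t :=
          deriv_saZ θ k hk1 t ▸ (diffZ k t).hasDerivAt
        have HYj : HasDerivAt (saY θ j) (-θ t * saZ θ j t) t :=
          ih j (by omega) t ▸ (diffY j t).hasDerivAt
        have HYk : HasDerivAt (saY θ k) (-θ t * saZ θ k t) t :=
          ih k (by omega) t ▸ (diffY k t).hasDerivAt
        have H := ((HXj.neg.mul HXk).add (HYj.mul HYk)).add (HZj.mul HZk)
        rw [show deriv (fun s => -saX θ j s * saX θ k s + saY θ j s * saY θ k s
          + saZ θ j s * saZ θ k s) t = _ from H.deriv]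
        have e1 : k + 1 = n + 3 - j := by omega
        have e2 : j - 1 + 1 = j := by omega
        have e3 : n + 2 - (j - 1) = n + 3 - j := by omega
        rw [e1]
        rw [hB]
        simp only [e1, e2, e3, hk, Pi.neg_apply]
        ring
      rw [Finset.sum_congr rfl hterm, ← Finset.mul_sum,
        ← Finset.Ico_add_one_right_eq_Icc, Finset.sum_Ico_eq_sum_range]
      have htel : (∑ i ∈ Finset.range (n + 1), (B (1 + i) - B (1 + i - 1)))
          = B (n + 1) - B 0 := by
        rw [Finset.sum_congr rfl (fun i _ => by rw [Nat.add_comm 1 i, Nat.add_sub_cancel])]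
        exact Finset.sum_range_sub B (n + 1)
      rw [show (n + 1 + 1) - 1 = n + 1 from by omega, htel, hB]
      simp only [show n + 2 - (n + 1) = 1 from by omega, Nat.sub_zero, Nat.zero_add,
        saZ_one, saX_one, Pi.zero_apply]
      have h2 : Complex.I * Complex.I = -1 := Complex.I_mul_I
      linear_combination (θ t * saZ θ (n + 2) t) * h2
theorem stmt10 (θ' : ℝ → ℝ) (hθ : ContDiff ℝ (⊤ : ℕ∞) θ')
    (n : ℕ) (hn : 1 ≤ n) (t : ℝ) :
    saZ (fun s => (θ' s : ℂ)) (n + 2) t =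
      -deriv (deriv (saZ (fun s => (θ' s : ℂ)) n)) t
        - (θ' t : ℂ) ^ 2 * saZ (fun s => (θ' s : ℂ)) n t
        + ((deriv θ' t : ℝ) : ℂ) * saY (fun s => (θ' s : ℂ)) n t := by
  set θ : ℝ → ℂ := fun s => (θ' s : ℂ) with hθdef
  have hθc : ContDiff ℝ (⊤ : ℕ∞) θ :=
    Complex.ofRealCLM.contDiff.comp (hθ.of_le (by simp))
  obtain ⟨m, rfl⟩ : ∃ m, n = m + 1 := ⟨n - 1, by omega⟩
  have hsm := sa_smooth θ hθc (m + 1)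
  have hZd : Differentiable ℝ (deriv (saZ θ (m + 1))) :=
    (contDiff_infty_iff_deriv.mp hsm.2.2).2.differentiable (by simp)
  have HD : HasDerivAt (deriv (saZ θ (m + 1))) (deriv (deriv (saZ θ (m + 1))) t) t :=
    (hZd t).hasDerivAt
  have Hθ : HasDerivAt θ ((deriv θ' t : ℝ) : ℂ) t := by
    rw [hθdef]
    exact ((hθ.differentiable (by simp)) t).hasDerivAt.ofReal_comp
  have HY : HasDerivAt (saY θ (m + 1)) (-θ t * saZ θ (m + 1) t) t :=
    deriv_saY θ hθc (m + 1) t ▸ ((hsm.2.1.differentiable (by simp)) t).hasDerivAt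
  have H := (HD.sub (Hθ.mul HY)).const_mul (-Complex.I)
  have key : saZ θ (m + 1 + 2) t =
      -Complex.I * (-Complex.I * (deriv (deriv (saZ θ (m + 1))) t -
        (((deriv θ' t : ℝ) : ℂ) * saY θ (m + 1) t + θ t * (-θ t * saZ θ (m + 1) t)))) := by
    rw [show m + 1 + 2 = m + 2 + 1 from rfl]
    rw [saZ_eq θ (m + 1)]
    simp only
    rw [saX_eq θ m]
    exact congrArg _ H.deriv
  rw [key]
  simp only [hθdef]
  have h2 : Complex.I * Complex.I = -1 := Complex.I_mul_I
  linear_combination (deriv (deriv (saZ (fun s => (θ' s : ℂ)) (m + 1))) t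
    - ((deriv θ' t : ℝ) : ℂ) * saY (fun s => (θ' s : ℂ)) (m + 1) t
    + ((θ' t : ℝ) : ℂ) ^ 2 * saZ (fun s => (θ' s : ℂ)) (m + 1) t) * h2
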